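/- Let K be a field and let A be a finite-dimensional split semisimple K-algebra equipped with a symmetrizing form t. Then there exist unique nonzero scalars s_V in K, one for each isomorphism class of simple A-modules V (called the Schur elements of (A,t)), such that t(a) = \sum_V s_V^{-1} \chi_V(a) for all a in A, where the sum runs over the isomorphism classes of simple A-modules and \chi_V(a) denotes the trace of the action of a on V. -/

import Mathlib

/-!
Acting on the simple modules gives a `K`-algebra map `ρ : A → ∏ᵢ End_K(Vᵢ)`. It is injective
because the common annihilator of the simple modules of a semisimple ring is its Jacobson radical,
which vanishes, and surjective by the Jacobson density theorem, since splitness and Schur's lemma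
make every `A`-endomorphism of `⨁ᵢ Vᵢ` diagonal with scalar entries. Along `ρ` the form `t`
becomes a symmetric functional on a product of matrix algebras, and every such functional is
`∑ᵢ cᵢ trᵢ`: from `E_kl = E_ki E_il` and symmetry, `t(E_kl) = δ_kl t(E_ii)`. Nondegeneracy of `t`
forces `cᵢ ≠ 0`, so `sᵢ = cᵢ⁻¹`, and uniqueness holds because the traces `trᵢ` are linearly
independent on `∏ᵢ End_K(Vᵢ)`.
-/

universe u

open Matrix in
theorem Matrix.eq_mul_trace_of_map_mul_comm {n R : Type*} [Fintype n] [DecidableEq n]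
    [CommSemiring R] (τ : Matrix n n R →ₗ[R] R) (hτ : ∀ M N, τ (M * N) = τ (N * M)) (i : n)
    (M : Matrix n n R) : τ M = τ (single i i 1) * M.trace := by
  induction M using Matrix.induction_on' with
  | h_zero => simp
  | h_add M N hM hN => rw [map_add, hM, hN, trace_add, mul_add]
  | h_std_basis k l x =>
    have hdiag : τ (single i i x) = x * τ (single i i 1) := by
      rw [← smul_eq_mul, ← map_smul, smul_single, smul_eq_mul, mul_one]
    calc τ (single k l x) = τ (single i l 1 * single k i x) := by
          rw [← hτ, single_mul_single_same, mul_one]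
      _ = τ (single i i 1) * (single k l x).trace := by
          by_cases hkl : k = l
          · subst hkl
            rw [single_mul_single_same, one_mul, hdiag, trace_single_eq_same, mul_comm]
          · simp [hkl, Ne.symm hkl]

theorem LinearMap.exists_eq_mul_trace_of_map_mul_comm {R M : Type*} [CommRing R]
    [AddCommGroup M] [Module R M] [Module.Free R M] [Module.Finite R M]
    (τ : Module.End R M →ₗ[R] R) (hτ : ∀ f g, τ (f * g) = τ (g * f)) :
    ∃ c, ∀ f, τ f = c * trace R M f := by
  classical
  let b := Module.Free.chooseBasis R M
  let e := LinearMap.toMatrixAlgEquiv b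
  cases isEmpty_or_nonempty (Module.Free.ChooseBasisIndex R M) with
  | inl _ => exact ⟨0, fun f => by rw [show f = 0 from e.injective (Subsingleton.elim _ _)]; simp⟩
  | inr h =>
    obtain ⟨i⟩ := h
    refine ⟨τ (e.symm (Matrix.single i i 1)), fun f => ?_⟩
    have := Matrix.eq_mul_trace_of_map_mul_comm (τ ∘ₗ e.symm.toLinearMap)
      (fun M N => by simp [hτ]) i (e f)
    simp only [LinearMap.comp_apply, AlgEquiv.toLinearMap_apply, AlgEquiv.symm_apply_apply]
      at this
    rw [LinearMap.trace_eq_matrix_trace R b]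
    exact this

section PiEnd

variable {R ι : Type*} [CommRing R] [Fintype ι] [DecidableEq ι] {V : ι → Type*}
  [∀ i, AddCommGroup (V i)] [∀ i, Module R (V i)]

open LinearMap

theorem Pi.ne_zero_of_sum_mul_trace_nondegenerate [∀ i, Nontrivial (V i)] {c : ι → R}
    (hnd : ∀ f : Π i, Module.End R (V i),
      (∀ g : Π i, Module.End R (V i), ∑ i, c i * trace R (V i) (f i * g i) = 0) → f = 0)
    (j : ι) : c j ≠ 0 := by
  intro hcj
  have : (Pi.single j 1 : Π i, Module.End R (V i)) = 0 := hnd _ fun g => by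
    refine Finset.sum_eq_zero fun i _ => ?_
    rcases eq_or_ne i j with rfl | hij
    · rw [hcj, zero_mul]
    · simp [hij]
  exact one_ne_zero (α := Module.End R (V j)) (by simpa using congr_fun this j)

variable [∀ i, Module.Free R (V i)] [∀ i, Module.Finite R (V i)]

theorem Pi.exists_eq_sum_mul_trace_of_map_mul_comm (τ : (Π i, Module.End R (V i)) →ₗ[R] R)
    (hτ : ∀ f g, τ (f * g) = τ (g * f)) :
    ∃ c : ι → R, ∀ f, τ f = ∑ i, c i * trace R (V i) (f i) := by
  have hτi (i : ι) : ∃ c, ∀ f, τ (Pi.single i f) = c * trace R (V i) f :=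
    exists_eq_mul_trace_of_map_mul_comm (τ ∘ₗ LinearMap.single R (fun i => Module.End R (V i)) i)
      fun f g => by simp [Pi.single_mul, hτ]
  choose c hc using hτi
  refine ⟨c, fun f => ?_⟩
  conv_lhs => rw [← Finset.univ_sum_single f]
  simp [hc]

theorem Pi.sum_mul_trace_injective [∀ i, Nontrivial (V i)] {c c' : ι → R}
    (h : ∀ f : Π i, Module.End R (V i),
      ∑ i, c i * trace R (V i) (f i) = ∑ i, c' i * trace R (V i) (f i)) : c = c' := by
  funext j
  obtain ⟨e, he⟩ : ∃ e : Module.End R (V j), trace R (V j) e = 1 := by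
    let b := Module.Free.chooseBasis R (V j)
    obtain ⟨k⟩ := b.index_nonempty
    exact ⟨(b.coord k).smulRight (b k), by simp⟩
  simpa [Pi.apply_single (fun i => trace R (V i)), he, Pi.single_apply] using h (Pi.single j e)

end PiEnd

theorem IsSemisimpleRing.eq_zero_of_forall_isSimpleModule_smul_eq_zero {A : Type u} [Ring A]
    [IsSemisimpleRing A] {a : A}
    (h : ∀ (N : Type u) [AddCommGroup N] [Module A N], IsSimpleModule A N → ∀ n : N, a • n = 0) :
    a = 0 := by
  have ha : a ∈ Ring.jacobson A := by
    rw [Ring.jacobson_eq_sInf_isMaximal]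
    refine Submodule.mem_sInf.mpr fun m hm => ?_
    have hsimple : IsSimpleModule A (A ⧸ m) :=
      isSimpleModule_iff_isCoatom.mpr (Ideal.isMaximal_def.mp hm)
    simpa [← Submodule.Quotient.mk_smul] using h (A ⧸ m) hsimple (Submodule.Quotient.mk 1)
  rwa [IsSemisimpleRing.jacobson_eq_bot] at ha

section Representation

variable {K : Type*} {A : Type u} {ι : Type*} [Field K] [Ring A] {V : ι → Type*}
  [∀ i, AddCommGroup (V i)] [∀ i, Module K (V i)] [∀ i, Module A (V i)]

open LinearMap in
theorem LinearMap.exists_pi_apply_eq_smul [Fintype ι] [DecidableEq ι]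
    (hsimple : ∀ i, IsSimpleModule A (V i))
    (hsplit : ∀ i, ∀ f : V i →ₗ[A] V i, ∃ c : K, ∀ v, f v = c • v)
    (hdistinct : ∀ i j, Nonempty (V i ≃ₗ[A] V j) → i = j)
    (g : (Π i, V i) →ₗ[A] Π i, V i) :
    ∃ c : ι → K, ∀ x i, g x i = c i • x i := by
  have hoff (i j : ι) (hij : i ≠ j) : proj i ∘ₗ g ∘ₗ single A V j = 0 := by
    have := hsimple i
    have := hsimple j
    refine (proj i ∘ₗ g ∘ₗ single A V j).bijective_or_eq_zero.resolve_left fun hbij => ?_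
    exact hij (hdistinct j i ⟨LinearEquiv.ofBijective _ hbij⟩).symm
  choose c hc using fun i => hsplit i (proj i ∘ₗ g ∘ₗ single A V i)
  refine ⟨c, fun x i => ?_⟩
  calc g x i = ∑ j, (proj i ∘ₗ g ∘ₗ single A V j) (x j) := by
        conv_lhs => rw [← Finset.univ_sum_single x]
        simp
    _ = c i • x i := by
        rw [Finset.sum_eq_single i (fun j _ hji => by rw [hoff i j hji.symm, zero_apply])
          (by simp), hc]

variable [Algebra K A] [∀ i, IsScalarTower K A (V i)]

theorem AlgHom.pi_lsmul_surjective [Fintype ι] [∀ i, Module.Finite K (V i)]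
    (hsimple : ∀ i, IsSimpleModule A (V i))
    (hsplit : ∀ i, ∀ f : V i →ₗ[A] V i, ∃ c : K, ∀ v, f v = c • v)
    (hdistinct : ∀ i j, Nonempty (V i ≃ₗ[A] V j) → i = j) :
    Function.Surjective (AlgHom.pi fun i => Algebra.lsmul K K (V i) : A →ₐ[K] _) := by
  classical
  intro f
  let F : Module.End (Module.End A (Π i, V i)) (Π i, V i) :=
    { toFun := fun x i => f i (x i)
      map_add' := fun x y => by ext i; simp
      map_smul' := fun g x => by
        obtain ⟨c, hc⟩ := LinearMap.exists_pi_apply_eq_smul hsimple hsplit hdistinct g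
        ext i
        simp [Module.End.smul_def, hc] }
  let b := Module.finBasis K (Π i, V i)
  obtain ⟨a, ha⟩ := jacobson_density F (Finset.univ.image b)
  have hab : Algebra.lsmul K K (Π i, V i) a = LinearMap.pi fun i => f i ∘ₗ LinearMap.proj i :=
    b.ext fun k => (ha (b k) (Finset.mem_image_of_mem b (Finset.mem_univ k))).symm
  refine ⟨a, funext fun i => LinearMap.ext fun w => ?_⟩
  simpa using congr_fun (LinearMap.congr_fun hab (Pi.single i w)) i

theorem AlgHom.pi_lsmul_injective [IsSemisimpleRing A]
    (hcomplete : ∀ (N : Type u) [AddCommGroup N] [Module A N], IsSimpleModule A N →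
      ∃ i, Nonempty (N ≃ₗ[A] V i)) :
    Function.Injective (AlgHom.pi fun i => Algebra.lsmul K K (V i) : A →ₐ[K] _) := by
  refine (injective_iff_map_eq_zero _).mpr fun a ha => ?_
  refine IsSemisimpleRing.eq_zero_of_forall_isSimpleModule_smul_eq_zero fun N _ _ hN n => ?_
  obtain ⟨i, ⟨e⟩⟩ := hcomplete N hN
  apply e.injective
  simpa using LinearMap.congr_fun (congr_fun ha i) (e n)

end Representation

theorem schur_elements_existence_uniqueness_general
    (K : Type) [Field K] (A : Type) [Ring A] [Algebra K A]
    -- `A` is semisimple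
    [IsSemisimpleRing A]
    -- `t` is a symmetrizing form on `A`
    (t : A →ₗ[K] K)
    (htr : ∀ a b : A, t (a * b) = t (b * a))
    (hnondeg : ∀ a : A, (∀ b : A, t (a * b) = 0) → a = 0)
    -- a complete family of pairwise non-isomorphic simple `A`-modules
    (ι : Type) [Fintype ι]
    (V : ι → Type) [∀ i, AddCommGroup (V i)] [∀ i, Module K (V i)]
    [∀ i, Module A (V i)] [∀ i, IsScalarTower K A (V i)] [∀ i, Module.Finite K (V i)]
    (hsimple : ∀ i, IsSimpleModule A (V i))
    -- `A` is split: the endomorphisms of each simple module are the scalars in `K`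
    (hsplit : ∀ i, ∀ f : V i →ₗ[A] V i, ∃ c : K, ∀ v, f v = c • v)
    (hdistinct : ∀ i j, Nonempty (V i ≃ₗ[A] V j) → i = j)
    (hcomplete : ∀ (N : Type) [AddCommGroup N] [Module A N], IsSimpleModule A N →
      ∃ i, Nonempty (N ≃ₗ[A] V i)) :
    ∃! s : ι → K, (∀ i, s i ≠ 0) ∧
      ∀ a : A, t a =
        ∑ i, (s i)⁻¹ * LinearMap.trace K (V i) (Algebra.lsmul K K (V i) a) := by
  classical
  have hV (i : ι) : Nontrivial (V i) := (hsimple i).nontrivial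
  let ρ : A ≃ₐ[K] Π i, Module.End K (V i) := AlgEquiv.ofBijective _
    ⟨AlgHom.pi_lsmul_injective hcomplete, AlgHom.pi_lsmul_surjective hsimple hsplit hdistinct⟩
  have hρ_symm (f : Π i, Module.End K (V i)) (i : ι) : Algebra.lsmul K K (V i) (ρ.symm f) = f i :=
    congr_fun (ρ.apply_symm_apply f) i
  have hρ_apply (a : A) (i : ι) : ρ a i = Algebra.lsmul K K (V i) a := rfl
  obtain ⟨c, hc⟩ := Pi.exists_eq_sum_mul_trace_of_map_mul_comm (t ∘ₗ ρ.symm.toLinearMap)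
    fun f g => by simpa using htr (ρ.symm f) (ρ.symm g)
  have ht (a : A) : t a = ∑ i, c i * LinearMap.trace K (V i) (Algebra.lsmul K K (V i) a) := by
    simpa [hρ_apply] using hc (ρ a)
  have hc0 : ∀ i, c i ≠ 0 := Pi.ne_zero_of_sum_mul_trace_nondegenerate fun f hf =>
    ρ.symm.injective <| by
      simpa using hnondeg (ρ.symm f) fun b => by simpa [ht, hρ_symm, hρ_apply] using hf (ρ b)
  refine ⟨fun i => (c i)⁻¹, ⟨fun i => inv_ne_zero (hc0 i), by simpa using ht⟩, ?_⟩
  rintro s ⟨-, hs⟩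
  have hcs : c = fun i => (s i)⁻¹ := Pi.sum_mul_trace_injective fun f => by
    simpa [hρ_symm] using (ht (ρ.symm f)).symm.trans (hs (ρ.symm f))
  funext i
  simp [hcs]

/-- **Schur elements.** Let `A` be a finite-dimensional split
semisimple algebra over a field `K` with a symmetrizing form `t`, and let
`(V i)_{i : ι}` be a complete set of pairwise non-isomorphic simple `A`-modules.
Then there is a unique family of nonzero scalars `s i ∈ K` (the Schur elements)
such that `t a = ∑ i, (s i)⁻¹ * χ_{V i}(a)` for all `a ∈ A`, where
`χ_{V i}(a)` is the trace of the action of `a` on `V i`. -/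
theorem schur_elements_existence_uniqueness
    (K : Type) [Field K] (A : Type) [Ring A] [Algebra K A] [FiniteDimensional K A]
    -- `A` is semisimple
    [IsSemisimpleRing A]
    -- `t` is a symmetrizing form on `A`
    (t : A →ₗ[K] K)
    (htr : ∀ a b : A, t (a * b) = t (b * a))
    (hnondeg : ∀ a : A, (∀ b : A, t (a * b) = 0) → a = 0)
    -- a complete family of pairwise non-isomorphic simple `A`-modules
    (ι : Type) [Fintype ι]
    (V : ι → Type) [∀ i, AddCommGroup (V i)] [∀ i, Module K (V i)]
    [∀ i, Module A (V i)] [∀ i, IsScalarTower K A (V i)] [∀ i, Module.Finite K (V i)]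
    (hsimple : ∀ i, IsSimpleModule A (V i))
    -- `A` is split: the endomorphisms of each simple module are the scalars in `K`
    (hsplit : ∀ i, ∀ f : V i →ₗ[A] V i, ∃ c : K, ∀ v, f v = c • v)
    (hdistinct : ∀ i j, Nonempty (V i ≃ₗ[A] V j) → i = j)
    (hcomplete : ∀ (N : Type) [AddCommGroup N] [Module A N], IsSimpleModule A N →
      ∃ i, Nonempty (N ≃ₗ[A] V i)) :
    ∃! s : ι → K, (∀ i, s i ≠ 0) ∧
      ∀ a : A, t a =
        ∑ i, (s i)⁻¹ * LinearMap.trace K (V i) (Algebra.lsmul K K (V i) a) :=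
  schur_elements_existence_uniqueness_general K A t htr hnondeg ι V hsimple hsplit hdistinct
    hcomplete
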